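/- Let G be a locally compact totally disconnected group, N a closed subgroup, and suppose a smooth representation of G restricted to N acts on S(C) (locally constant compactly supported functions on an ℓ-space C) by (n·φ)(c) = χ_c(n)φ(c) for characters χ_c of N. If for every c ∈ C the character n ↦ χ_c(n)ψ(n)⁻¹ is nontrivial on N (ψ a fixed character of N exhausted by its compact open subgroups), then the twisted Jacquet module J_{N,ψ}(S(C)) = S(C)/span{n·φ - ψ(n)φ} is zero. -/

import Mathlib

/-!
The action is by pointwise multiplication, so a single group element already works locally:
if `χ_c(m) ≠ ψ(m)`, then on the clopen fibre of `c' ↦ χ_{c'}(m)` through `c` every `φ ∈ S(C)`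
equals `m · φ' - ψ(m) φ'` for `φ' = φ / (χ(m) - ψ(m))`. Finitely many such fibres cover the
compact support of a given `φ`, and cutting `φ` along them writes it as a sum of such relations.
-/

open Function Set

namespace AddSubmonoid

variable {ι C E : Type*} [TopologicalSpace C] [AddCommMonoid E] (M : AddSubmonoid (C → E))

theorem mem_of_support_subset_biUnion_isClopen {U : ι → Set C} (hU : ∀ i, IsClopen (U i))
    (hM : ∀ i (φ : C → E), IsLocallyConstant φ → HasCompactSupport φ →
      Function.support φ ⊆ U i → φ ∈ M)
    (t : Finset ι) :
    ∀ φ : C → E, IsLocallyConstant φ → HasCompactSupport φ → Function.support φ ⊆ ⋃ i ∈ t, U i →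
      φ ∈ M := by
  classical
  induction t using Finset.induction_on with
  | empty =>
    intro φ _ _ hφ
    obtain rfl : φ = 0 := by simpa using hφ
    exact M.zero_mem
  | insert a t _ ih =>
    intro φ hlc hcs hφ
    have hlc_indicator {s : Set C} (hs : IsClopen s) : IsLocallyConstant (s.indicator φ) :=
      (LocallyConstant.indicator ⟨φ, hlc⟩ hs).isLocallyConstant
    have hcs_indicator (s : Set C) : HasCompactSupport (s.indicator φ) :=
      hcs.mono (support_indicator.trans_subset inter_subset_right)
    have hsupp_compl : Function.support ((U a)ᶜ.indicator φ) ⊆ ⋃ i ∈ t, U i := by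
      rw [support_indicator]
      rintro c ⟨hca, hc⟩
      exact (Finset.set_biUnion_insert a t U ▸ hφ hc).resolve_left hca
    rw [← indicator_self_add_compl (U a) φ]
    exact M.add_mem
      (hM a _ (hlc_indicator (hU a)) (hcs_indicator _) support_indicator_subset)
      (ih _ (hlc_indicator (hU a).compl) (hcs_indicator _) hsupp_compl)

theorem mem_of_locally_mem
    (hloc : ∀ c, ∃ U : Set C, IsClopen U ∧ c ∈ U ∧
      ∀ φ : C → E, IsLocallyConstant φ → HasCompactSupport φ →
        Function.support φ ⊆ U → φ ∈ M)
    {φ : C → E} (hlc : IsLocallyConstant φ) (hcs : HasCompactSupport φ) : φ ∈ M := by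
  choose U hU hcU hM using hloc
  obtain ⟨t, ht⟩ := IsCompact.elim_finite_subcover hcs U (fun c => (hU c).isOpen)
    fun c _ => mem_iUnion.2 ⟨c, hcU c⟩
  exact M.mem_of_support_subset_biUnion_isClopen hU hM t φ hlc hcs
    ((subset_tsupport φ).trans ht)

end AddSubmonoid

section TwistedJacquet

variable {N C K : Type*} [MulOneClass N] [TopologicalSpace C] [Field K]

/-- The relations `n · φ' - ψ(n) φ'` spanning the kernel of `S(C) → J_{N,ψ}(S(C))`. -/
def twistedJacquetRelations (χ : C → N →* Kˣ) (ψ : N →* Kˣ) : Set (C → K) :=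
  {f | ∃ (n : N) (φ' : C → K), IsLocallyConstant φ' ∧ HasCompactSupport φ' ∧
    f = fun c => (χ c n : K) * φ' c - (ψ n : K) * φ' c}

theorem mem_span_twistedJacquetRelations_of_support_subset (χ : C → N →* Kˣ) (ψ : N →* Kˣ)
    (m : N) (hχm : IsLocallyConstant fun c => (χ c m : K)) {φ : C → K}
    (hlc : IsLocallyConstant φ) (hcs : HasCompactSupport φ)
    (hsupp : support φ ⊆ {c | (χ c m : K) ≠ ψ m}) :
    φ ∈ Submodule.span K (twistedJacquetRelations χ ψ) := by
  refine Submodule.subset_span ⟨m, fun c => φ c / ((χ c m : K) - ψ m),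
    hlc.comp₂ hχm fun x y => x / (y - ψ m), hcs.mono fun c hc => (div_ne_zero_iff.mp hc).1,
    funext fun c => ?_⟩
  by_cases hc : φ c = 0
  · simp [hc]
  · rw [← sub_mul, mul_div_cancel₀ _ (sub_ne_zero.mpr (hsupp hc))]

end TwistedJacquet

theorem twisted_jacquet_vanishing_general
    {N : Type*} [Group N]
    {C : Type*} [TopologicalSpace C]
    (χ : C → (N →* ℂˣ)) (ψ : N →* ℂˣ)
    (hχc : ∀ n : N, IsLocallyConstant fun c : C => ((χ c n : ℂˣ) : ℂ))
    (hnt : ∀ c : C, ∃ n : N, χ c n ≠ ψ n) :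
    ∀ φ : C → ℂ, IsLocallyConstant φ → HasCompactSupport φ →
      φ ∈ Submodule.span ℂ {f : C → ℂ |
        ∃ (n : N) (φ' : C → ℂ), IsLocallyConstant φ' ∧ HasCompactSupport φ' ∧
          f = fun c => ((χ c n : ℂˣ) : ℂ) * φ' c - ((ψ n : ℂˣ) : ℂ) * φ' c} := by
  intro φ hlc hcs
  refine (Submodule.span ℂ (twistedJacquetRelations χ ψ)).toAddSubmonoid.mem_of_locally_mem
    (fun c => ?_) hlc hcs
  obtain ⟨m, hm⟩ := hnt c
  refine ⟨{c' | (χ c' m : ℂ) = χ c m}, (hχc m).isClopen_fiber _, rfl,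
    fun φ hlc hcs hφ => mem_span_twistedJacquetRelations_of_support_subset χ ψ m (hχc m) hlc hcs
      fun c' hc' => ?_⟩
  rw [mem_ofPred_eq, hφ hc']
  exact Units.val_injective.ne hm

/-- Twisted Jacquet module vanishing: if `N` (a locally compact totally disconnected group
exhausted by its compact open subgroups) acts on locally constant compactly supported functions
on an ℓ-space `C` by `(n · φ)(c) = χ_c(n) φ(c)`, and for every `c ∈ C` the character
`n ↦ χ_c(n) ψ(n)⁻¹` is nontrivial, then `J_{N,ψ}(S(C)) = 0`, i.e. every element of `S(C)`
lies in the span of the elements `n · φ - ψ(n) φ`. -/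
theorem twisted_jacquet_vanishing
    {N : Type*} [Group N] [TopologicalSpace N] [IsTopologicalGroup N]
    [LocallyCompactSpace N] [TotallyDisconnectedSpace N]
    {C : Type*} [TopologicalSpace C] [LocallyCompactSpace C] [TotallyDisconnectedSpace C]
    (hexh : ∀ K : Set N, IsCompact K →
      ∃ U : Subgroup N, IsOpen (U : Set N) ∧ IsCompact (U : Set N) ∧ K ⊆ (U : Set N))
    (χ : C → (N →* ℂˣ)) (ψ : N →* ℂˣ)
    (hχc : ∀ n : N, IsLocallyConstant fun c : C => ((χ c n : ℂˣ) : ℂ))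
    (hχn : ∀ c : C, Continuous fun n : N => ((χ c n : ℂˣ) : ℂ))
    (hnt : ∀ c : C, ∃ n : N, χ c n ≠ ψ n) :
    ∀ φ : C → ℂ, IsLocallyConstant φ → HasCompactSupport φ →
      φ ∈ Submodule.span ℂ {f : C → ℂ |
        ∃ (n : N) (φ' : C → ℂ), IsLocallyConstant φ' ∧ HasCompactSupport φ' ∧
          f = fun c => ((χ c n : ℂˣ) : ℂ) * φ' c - ((ψ n : ℂˣ) : ℂ) * φ' c} :=
  twisted_jacquet_vanishing_general χ ψ hχc hnt
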